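/- Closed-form Bregman projection onto one marginal constraint: Let ζ ∈ ℝ^{n×m} have strictly positive entries and μ ∈ ℝ^n be a probability vector with strictly positive entries. Then the minimizer of KL(γ | ζ) = Σ_{ij} γ_{ij}(log(γ_{ij}/ζ_{ij}) - 1) over matrices γ with nonnegative entries satisfying γ1_m = μ is γ* = diag(μ / (ζ1_m)) · ζ, i.e., γ*_{ij} = μ_i ζ_{ij} / Σ_l ζ_{il}. -/

import Mathlib

lemma key_ineq (a b : ℝ) (ha : 0 ≤ a) (hb : 0 < b) :
    a - b ≤ a * Real.log (a / b) := by
  rcases ha.eq_or_lt with h | h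
  · simp [← h]
    linarith
  · have h1 : Real.log (b / a) ≤ b / a - 1 := Real.log_le_sub_one_of_pos (by positivity)
    have h2 : Real.log (a / b) = - Real.log (b / a) := by
      rw [← Real.log_inv]; congr 1; field_simp
    have h3 : a * Real.log (b / a) ≤ a * (b / a - 1) :=
      mul_le_mul_of_nonneg_left h1 h.le
    have h4 : a * (b / a - 1) = b - a := by field_simp
    rw [h2]; nlinarith

lemma key_eq (a b : ℝ) (ha : 0 ≤ a) (hb : 0 < b)
    (h : a * Real.log (a / b) = a - b) : a = b := by
  rcases ha.eq_or_lt with h0 | h0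
  · exfalso; rw [← h0] at h; simp at h; linarith
  · by_contra hne
    have hq : b / a ≠ 1 := by
      intro h1
      apply hne
      field_simp at h1
      linarith
    have h1 : Real.log (b / a) < b / a - 1 :=
      Real.log_lt_sub_one_of_pos (by positivity) hq
    have h2 : Real.log (a / b) = - Real.log (b / a) := by
      rw [← Real.log_inv]; congr 1; field_simp
    have h3 : a * Real.log (b / a) < a * (b / a - 1) :=
      mul_lt_mul_of_pos_left h1 h0
    have h4 : a * (b / a - 1) = b - a := by field_simp
    rw [h2] at h; nlinarith

/-- The entropic divergence `KL(γ|ζ) = Σ_{ij} γ_{ij}(log(γ_{ij}/ζ_{ij}) - 1)`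
(with the convention `0·log 0 = 0`, automatic since `Real.log 0 = 0`). -/
noncomputable def KLmat {n m : ℕ} (γ ζ : Fin n → Fin m → ℝ) : ℝ :=
  ∑ i, ∑ j, γ i j * (Real.log (γ i j / ζ i j) - 1)

/-- closed-form Bregman projection onto one marginal constraint. The minimizer of
`KL(γ|ζ)` over nonnegative `γ` with `γ1 = μ` is `γ*_{ij} = μ_i ζ_{ij} / Σ_l ζ_{il}`. -/
theorem bregman_projection_closed_form {n m : ℕ} (hn : 0 < n) (hm : 0 < m)
    (ζ : Fin n → Fin m → ℝ) (hζ : ∀ i j, 0 < ζ i j)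
    (μ : Fin n → ℝ) (hμ : ∀ i, 0 < μ i) (hμsum : ∑ i, μ i = 1) :
    let γstar : Fin n → Fin m → ℝ := fun i j => μ i * ζ i j / ∑ l, ζ i l
    ((∀ i j, 0 ≤ γstar i j) ∧ (∀ i, ∑ j, γstar i j = μ i)) ∧
      ∀ γ : Fin n → Fin m → ℝ, (∀ i j, 0 ≤ γ i j) → (∀ i, ∑ j, γ i j = μ i) →
        KLmat γstar ζ ≤ KLmat γ ζ ∧ (KLmat γ ζ = KLmat γstar ζ → γ = γstar) := by
  intro γstar
  have hS : ∀ i, 0 < ∑ l, ζ i l := fun i =>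
    Finset.sum_pos (fun l _ => hζ i l) ⟨⟨0, hm⟩, Finset.mem_univ _⟩
  have hγstar_pos : ∀ i j, 0 < γstar i j := fun i j =>
    div_pos (mul_pos (hμ i) (hζ i j)) (hS i)
  have hrow : ∀ i, ∑ j, γstar i j = μ i := by
    intro i
    have : ∑ j, γstar i j = μ i * (∑ j, ζ i j) / ∑ l, ζ i l := by
      rw [Finset.mul_sum, Finset.sum_div]
    rw [this, mul_div_assoc, div_self (hS i).ne', mul_one]
  refine ⟨⟨fun i j => (hγstar_pos i j).le, hrow⟩, ?_⟩
  intro γ hγ hγrow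
  -- pointwise identity
  have hpt : ∀ i j, γ i j * (Real.log (γ i j / ζ i j) - 1)
      = γ i j * Real.log (γ i j / γstar i j)
        + γ i j * (Real.log (μ i / ∑ l, ζ i l) - 1) := by
    intro i j
    rcases (hγ i j).eq_or_lt with h0 | h0
    · simp [← h0]
    · have h1 : γ i j / ζ i j = (γ i j / γstar i j) * (μ i / ∑ l, ζ i l) := by
        show γ i j / ζ i j = (γ i j / (μ i * ζ i j / ∑ l, ζ i l)) * (μ i / ∑ l, ζ i l)
        field_simp [(hζ i j).ne', (hμ i).ne', (hS i).ne']
      rw [h1, Real.log_mul (ne_of_gt (div_pos h0 (hγstar_pos i j)))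
        (ne_of_gt (div_pos (hμ i) (hS i)))]
      ring
  have hKLγ : KLmat γ ζ = (∑ i, ∑ j, γ i j * Real.log (γ i j / γstar i j))
      + ∑ i, μ i * (Real.log (μ i / ∑ l, ζ i l) - 1) := by
    unfold KLmat
    rw [← Finset.sum_add_distrib]
    refine Finset.sum_congr rfl fun i _ => ?_
    calc ∑ j, γ i j * (Real.log (γ i j / ζ i j) - 1)
        = ∑ j, (γ i j * Real.log (γ i j / γstar i j)
            + γ i j * (Real.log (μ i / ∑ l, ζ i l) - 1)) :=
          Finset.sum_congr rfl fun j _ => hpt i j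
      _ = (∑ j, γ i j * Real.log (γ i j / γstar i j))
          + (∑ j, γ i j) * (Real.log (μ i / ∑ l, ζ i l) - 1) := by
          rw [Finset.sum_add_distrib, Finset.sum_mul]
      _ = (∑ j, γ i j * Real.log (γ i j / γstar i j))
          + μ i * (Real.log (μ i / ∑ l, ζ i l) - 1) := by rw [hγrow i]
  have hKLstar : KLmat γstar ζ = ∑ i, μ i * (Real.log (μ i / ∑ l, ζ i l) - 1) := by
    unfold KLmat
    refine Finset.sum_congr rfl fun i _ => ?_
    calc ∑ j, γstar i j * (Real.log (γstar i j / ζ i j) - 1)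
        = ∑ j, γstar i j * (Real.log (μ i / ∑ l, ζ i l) - 1) := by
          refine Finset.sum_congr rfl fun j _ => ?_
          have hr : γstar i j / ζ i j = μ i / ∑ l, ζ i l := by
            show (μ i * ζ i j / ∑ l, ζ i l) / ζ i j = μ i / ∑ l, ζ i l
            field_simp [(hζ i j).ne', (hS i).ne']
          rw [hr]
      _ = (∑ j, γstar i j) * (Real.log (μ i / ∑ l, ζ i l) - 1) := by
          rw [Finset.sum_mul]
      _ = μ i * (Real.log (μ i / ∑ l, ζ i l) - 1) := by rw [hrow i]
  have hterm : ∀ i j, γ i j - γstar i j ≤ γ i j * Real.log (γ i j / γstar i j) :=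
    fun i j => key_ineq _ _ (hγ i j) (hγstar_pos i j)
  have hsum0 : ∑ i, ∑ j, (γ i j - γstar i j) = 0 := by
    have : ∀ i, ∑ j, (γ i j - γstar i j) = 0 := by
      intro i
      rw [Finset.sum_sub_distrib, hγrow i, hrow i, sub_self]
    simp [this]
  have hT : (0 : ℝ) ≤ ∑ i, ∑ j, γ i j * Real.log (γ i j / γstar i j) := by
    rw [← hsum0]
    exact Finset.sum_le_sum fun i _ =>
      Finset.sum_le_sum fun j _ => hterm i j
  constructor
  · rw [hKLγ, hKLstar]; linarith
  · intro heq
    rw [hKLγ, hKLstar] at heq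
    have hT0 : ∑ i, ∑ j, γ i j * Real.log (γ i j / γstar i j) = 0 := by linarith
    have hnonneg : ∀ i ∈ Finset.univ, (0:ℝ) ≤
        ∑ j, (γ i j * Real.log (γ i j / γstar i j) - (γ i j - γstar i j)) :=
      fun i _ => Finset.sum_nonneg fun j _ => sub_nonneg.2 (hterm i j)
    have hD : ∑ i, ∑ j,
        (γ i j * Real.log (γ i j / γstar i j) - (γ i j - γstar i j)) = 0 := by
      have h1 := hsum0
      simp only [Finset.sum_sub_distrib] at h1 ⊢
      linarith [hT0]
    funext i j
    have h2 := (Finset.sum_eq_zero_iff_of_nonneg hnonneg).1 hD i (Finset.mem_univ i)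
    have h3 := (Finset.sum_eq_zero_iff_of_nonneg
      (fun j _ => sub_nonneg.2 (hterm i j))).1 h2 j (Finset.mem_univ j)
    exact key_eq _ _ (hγ i j) (hγstar_pos i j) (by linarith)
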